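/- arXiv:2102.12824 — 7 statements merged into one kernel-verified Lean document; each statement's English description precedes it below -/
import Mathlib

section
/- Let v_0, v_1, ..., v_l be strings where v_0 = s, v_l is the empty string, and for each k, v_{k+1} is the longest proper suffix of v_k that is a prefix of some string in a set P (the failure-link chain). Then every string that is simultaneously a proper suffix of s and a prefix of some string in P appears among v_1, ..., v_l. -/
/-- The failure-link chain starting at `s ∈ P` visits every string that is
simultaneously a proper suffix of `s` and a prefix of some string in `P`.
Here `v (k+1)` is the longest proper suffix of `v k` that is a prefix of
some string in `P`, with `v 0 = s` and `v l = ε`. -/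
theorem failure_chain_complete {α : Type*} (P : Set (List α)) (s : List α)
    (hsP : s ∈ P) (l : ℕ) (v : ℕ → List α)
    (h0 : v 0 = s) (hl : v l = [])
    (hchain : ∀ k < l,
      (v (k+1) <:+ v k ∧ v (k+1) ≠ v k) ∧
      (∃ p ∈ P, v (k+1) <+: p) ∧
      (∀ w : List α, w <:+ v k → w ≠ v k → (∃ p ∈ P, w <+: p) →
        w.length ≤ (v (k+1)).length)) :
    ∀ w : List α, w <:+ s → w ≠ s → (∃ p ∈ P, w <+: p) →
      ∃ k, 1 ≤ k ∧ k ≤ l ∧ w = v k := by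
  intro w hws hwne hwP
  -- main claim: if w is a suffix of v k with k ≤ l, then w = v m for some k ≤ m ≤ l
  have key : ∀ d k, k + d = l → w <:+ v k → ∃ m, k ≤ m ∧ m ≤ l ∧ w = v m := by
    intro d
    induction d with
    | zero =>
      intro k hk hsuf
      refine ⟨k, le_refl _, by omega, ?_⟩
      have : k = l := by omega
      subst this
      rw [hl] at hsuf ⊢
      exact List.suffix_nil.mp hsuf
    | succ d ih =>
      intro k hk hsuf
      by_cases heq : w = v k
      · exact ⟨k, le_refl _, by omega, heq⟩
      · have hkl : k < l := by omega
        obtain ⟨⟨hsuf1, _⟩, _, hmax⟩ := hchain k hkl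
        have hlen : w.length ≤ (v (k+1)).length := hmax w hsuf heq hwP
        have hws' : w <:+ v (k+1) := by
          rcases List.suffix_or_suffix_of_suffix hsuf hsuf1 with h | h
          · exact h
          · have := h.length_le
            have : w = v (k+1) := List.IsSuffix.eq_of_length_le h (by omega) |>.symm
            rw [this]
        obtain ⟨m, hm1, hm2, hm3⟩ := ih (k+1) (by omega) hws'
        exact ⟨m, by omega, hm2, hm3⟩
  obtain ⟨m, _, hm2, hm3⟩ := key l 0 (by omega) (by rw [h0]; exact hws)
  refine ⟨m, ?_, hm2, hm3⟩
  rcases Nat.eq_zero_or_pos m with h | h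
  · subst h; rw [h0] at hm3; exact absurd hm3 hwne
  · exact h
end

section
/- With R(u) = { i : u is a proper prefix of s_i } for strings u and a family s_1, ..., s_n, and a sequence of strings v_0, ..., v_l of strictly decreasing lengths, the string v_k (k ≥ 1) is the longest overlap from s_i to s_j if and only if j ∈ R(v_k) \ (R(v_{k-1}) ∪ ... ∪ R(v_0)), where each v_m is a suffix of s_i and the v_m enumerate all overlaps from s_i to strings in P. -/
/-- Lemma 1 of the paper. With `R u = { j : u is a proper prefix of s j }` and
`v 0, …, v l` the suffixes of `s i` that are prefixes of strings in
`P = {s 1, …, s n}`, in strictly decreasing length order, the string `v k`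
(`k ≥ 1`) is the longest overlap from `s i` to `s j` if and only if
`j ∈ R (v k) \ (R (v (k-1)) ∪ ⋯ ∪ R (v 0))`. -/
theorem longest_overlap_iff_new_index {α : Type*} {n : ℕ} (s : Fin n → List α)
    (hsub : ∀ i j : Fin n, s i <:+: s j → s i = s j)
    (i : Fin n) (l : ℕ) (v : ℕ → List α)
    (h0 : v 0 = s i) (hl : v l = [])
    (hsuf : ∀ m ≤ l, v m <:+ s i)
    (hdec : ∀ m k, m < k → k ≤ l → (v k).length < (v m).length)
    (hcomplete : ∀ w : List α, ∀ j : Fin n,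
      ((w <:+ s i ∧ w ≠ s i) ∧ (w <+: s j ∧ w ≠ s j)) → ∃ m ≤ l, w = v m)
    (k : ℕ) (hk1 : 1 ≤ k) (hkl : k ≤ l) (j : Fin n) :
    (((v k <:+ s i ∧ v k ≠ s i) ∧ (v k <+: s j ∧ v k ≠ s j)) ∧
      ∀ w : List α, ((w <:+ s i ∧ w ≠ s i) ∧ (w <+: s j ∧ w ≠ s j)) →
        w.length ≤ (v k).length) ↔
    ((v k <+: s j ∧ v k ≠ s j) ∧
      ∀ m < k, ¬ (v m <+: s j ∧ v m ≠ s j)) := by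
  constructor
  · rintro ⟨⟨⟨hvs, hvne⟩, hpref⟩, hmax⟩
    refine ⟨hpref, fun m hmk ⟨hmpref, hmne⟩ => ?_⟩
    have hml : m ≤ l := le_of_lt (lt_of_lt_of_le hmk hkl)
    by_cases hm0 : m = 0
    · subst hm0
      rw [h0] at hmpref hmne
      exact hmne (hsub i j hmpref.isInfix)
    · have hm1 : 1 ≤ m := Nat.one_le_iff_ne_zero.mpr hm0
      have hlen : (v m).length < (v 0).length := hdec 0 m hm1 hml
      have hvmne : v m ≠ s i := by
        intro h; rw [h, h0] at hlen; exact lt_irrefl _ hlen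
      have := hmax (v m) ⟨⟨hsuf m hml, hvmne⟩, hmpref, hmne⟩
      exact absurd this (not_le.mpr (hdec m k hmk hkl))
  · rintro ⟨⟨hpref, hne⟩, hnew⟩
    have hlen : (v k).length < (v 0).length := hdec 0 k hk1 hkl
    have hvne : v k ≠ s i := by
      intro h; rw [h, h0] at hlen; exact lt_irrefl _ hlen
    refine ⟨⟨⟨hsuf k hkl, hvne⟩, hpref, hne⟩, fun w hw => ?_⟩
    obtain ⟨m, hml, rfl⟩ := hcomplete w j hw
    rcases lt_trichotomy m k with h | h | h
    · exact absurd hw.2 (hnew m h)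
    · subst h; exact le_refl _
    · exact le_of_lt (hdec k m h hml)
end

section
/- With notation as before: if v_k is a proper prefix of v_m (m < k) and for every q with m < q < k, v_q is not a prefix of v_m and v_m is not a prefix of v_q, then R(v_m) ⊆ I_k(m+1), and hence |I_k(m+1) ∩ R(v_m)| = |R(v_m)|. -/
/-- Case 2(b) of Lemma 2: if `v k` is a proper prefix of `v m` (`m < k`) and
no intermediate `v q` (`m < q < k`) is comparable with `v m` by the prefix
relation, then `R (v m) ⊆ I (m+1)` and hence
`|I (m+1) ∩ R (v m)| = |R (v m)|`. -/
theorem R_subset_Ik_of_first_ancestor {α : Type*} {n : ℕ} (s : Fin n → List α)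
    (sstr : List α) (l : ℕ) (v : ℕ → List α)
    (hsuf : ∀ m ≤ l, v m <:+ sstr)
    (hdec : ∀ m k, m < k → k ≤ l → (v k).length < (v m).length)
    (R : List α → Finset (Fin n))
    (hR : ∀ u j, j ∈ R u ↔ (u <+: s j ∧ u ≠ s j))
    (k : ℕ) (hkl : k ≤ l)
    (I : ℕ → Finset (Fin n))
    (hIk : I k = R (v k)) (hI : ∀ m < k, I m = I (m+1) \ R (v m))
    (m : ℕ) (hm : m < k) (hpre : v k <+: v m ∧ v k ≠ v m)
    (hnoq : ∀ q, m < q → q < k → ¬ (v q <+: v m) ∧ ¬ (v m <+: v q)) :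
    R (v m) ⊆ I (m+1) ∧ (I (m+1) ∩ R (v m)).card = (R (v m)).card := by
  have hsubk : R (v m) ⊆ R (v k) := by
    intro j hj
    rw [hR] at hj ⊢
    obtain ⟨hjp, hjn⟩ := hj
    refine ⟨hpre.1.trans hjp, ?_⟩
    intro heq
    have h1 : (v k).length < (v m).length := hdec m k hm hkl
    have h2 : (v m).length ≤ (s j).length := hjp.length_le
    rw [heq] at h1; omega
  have key : ∀ d, m < k - d → R (v m) ⊆ I (k - d) := by
    intro d
    induction d with
    | zero => intro _; simpa [hIk] using hsubk
    | succ d ih =>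
      intro hmt
      set t := k - (d + 1) with ht
      have htk : t < k := by omega
      have ht1 : t + 1 = k - d := by omega
      rw [hI t htk]
      intro j hj
      rw [Finset.mem_sdiff]
      refine ⟨by rw [ht1]; exact ih (by omega) hj, ?_⟩
      intro hjt
      rw [hR] at hj hjt
      rcases (List.prefix_or_prefix_of_prefix hjt.1 hj.1) with h | h
      · exact (hnoq t hmt htk).1 h
      · exact (hnoq t hmt htk).2 h
  have hsub : R (v m) ⊆ I (m + 1) := by
    have := key (k - (m + 1)) (by omega)
    have heq : k - (k - (m + 1)) = m + 1 := by omega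
    rwa [heq] at this
  exact ⟨hsub, by rw [Finset.inter_eq_right.mpr hsub]⟩
end

section
/- Define up(v_m) = v_k if v_k is the first element after v_m in the sequence v_{m+1}, ..., v_l that is a prefix of v_m. Then for all 0 ≤ m < k ≤ l: |I_k(m+1) ∩ R(v_m)| = |R(v_m)| if up(v_m) = v_k, and |I_k(m+1) ∩ R(v_m)| = 0 otherwise. -/
/-- Lemma 2 of the paper: `|I_k (m+1) ∩ R (v m)|` equals `|R (v m)|` if
`up (v m) = v k`, and `0` otherwise, where `up (v m)` is the first element
after `v m` in the chain that is a prefix of `v m`. -/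
theorem Ik_inter_card_up {α : Type*} {n : ℕ} (s : Fin n → List α)
    (i : Fin n) (l : ℕ) (v : ℕ → List α)
    (hsuf : ∀ m ≤ l, v m <:+ s i) (hl : v l = [])
    (hdec : ∀ m k, m < k → k ≤ l → (v k).length < (v m).length)
    (hPpre : ∀ m ≤ l, ∃ j : Fin n, v m <+: s j)
    (R : List α → Finset (Fin n))
    (hR : ∀ u j, j ∈ R u ↔ (u <+: s j ∧ u ≠ s j))
    (I : ℕ → ℕ → Finset (Fin n))
    (hIk : ∀ k ≤ l, I k k = R (v k))
    (hI : ∀ k ≤ l, ∀ m < k, I k m = I k (m+1) \ R (v m))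
    (up : ℕ → ℕ)
    (hup : ∀ m < l, m < up m ∧ up m ≤ l ∧ v (up m) <+: v m ∧
      ∀ q, m < q → q < up m → ¬ (v q <+: v m)) :
    ∀ m k, m < k → k ≤ l →
      (I k (m+1) ∩ R (v m)).card =
        if up m = k then (R (v m)).card else 0 := by
  intro m k hmk hkl
  have hml : m < l := lt_of_lt_of_le hmk hkl
  obtain ⟨hup1, hup2, hup3, hup4⟩ := hup m hml
  -- monotonicity of the I chain
  have mono : ∀ b ≤ k, ∀ a ≤ b, I k a ⊆ I k b := by
    intro b
    induction b with
    | zero =>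
      intro _ a ha
      have : a = 0 := Nat.le_zero.mp ha
      subst this
      exact subset_rfl
    | succ b ih =>
      intro hb a ha
      rcases Nat.eq_or_lt_of_le ha with h | h
      · subst h; exact subset_rfl
      · have ha' : a ≤ b := Nat.lt_succ_iff.mp h
        have h1 : I k a ⊆ I k b := ih (Nat.le_of_succ_le hb) a ha'
        have h2 : I k b = I k (b+1) \ R (v b) := hI k hkl b (Nat.lt_of_succ_le hb)
        exact h1.trans (by rw [h2]; exact Finset.sdiff_subset)
  by_cases hcase : up m = k
  · -- up m = k : the intersection is all of R (v m)
    have hvk : v k <+: v m := by rw [← hcase]; exact hup3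
    have RsubRk : R (v m) ⊆ R (v k) := by
      intro j hj
      rw [hR] at hj ⊢
      obtain ⟨hpre, hne⟩ := hj
      refine ⟨hvk.trans hpre, fun heq => ?_⟩
      have h1 : (v k).length < (v m).length := hdec m k hmk hkl
      have h2 : (v m).length ≤ (s j).length := hpre.length_le
      rw [heq] at h1
      omega
    have key : ∀ d p, m + 1 ≤ p → p + d = k → R (v m) ⊆ I k p := by
      intro d
      induction d with
      | zero =>
        intro p h1 h2
        have : p = k := by omega
        rw [this, hIk k hkl]
        exact RsubRk
      | succ d ih =>
        intro p h1 h2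
        have hpk : p < k := by omega
        rw [hI k hkl p hpk]
        intro j hj
        rw [Finset.mem_sdiff]
        refine ⟨ih (p+1) (by omega) (by omega) hj, fun hjp => ?_⟩
        obtain ⟨hpre1, _⟩ := (hR _ j).mp hj
        obtain ⟨hpre2, _⟩ := (hR _ j).mp hjp
        have hlen : (v p).length ≤ (v m).length :=
          le_of_lt (hdec m p (by omega) (by omega))
        have hpm : v p <+: v m := List.prefix_of_prefix_length_le hpre2 hpre1 hlen
        exact hup4 p (by omega) (by omega) hpm
    rw [if_pos hcase, Finset.inter_eq_right.mpr (key (k - (m+1)) (m+1) le_rfl (by omega))]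
  · -- up m ≠ k : the intersection is empty
    rw [if_neg hcase, Finset.card_eq_zero, Finset.eq_empty_iff_forall_notMem]
    intro j hj
    obtain ⟨hjI, hjR⟩ := Finset.mem_inter.mp hj
    obtain ⟨hprem, hnem⟩ := (hR _ j).mp hjR
    rcases lt_or_gt_of_ne hcase with h | h
    · -- up m < k
      have hnot : j ∉ R (v (up m)) := by
        have h1 : I k (m+1) ⊆ I k (up m) := mono (up m) (le_of_lt h) (m+1) hup1
        have h2 : I k (up m) = I k (up m + 1) \ R (v (up m)) := hI k hkl (up m) h
        have := h1 hjI
        rw [h2, Finset.mem_sdiff] at this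
        exact this.2
      apply hnot
      rw [hR]
      refine ⟨hup3.trans hprem, fun heq => ?_⟩
      have h1 : (v (up m)).length < (v m).length := hdec m (up m) hup1 hup2
      have h2 : (v m).length ≤ (s j).length := hprem.length_le
      rw [heq] at h1
      omega
    · -- k < up m
      have h1 : I k (m+1) ⊆ I k k := mono k le_rfl (m+1) hmk
      have h2 := h1 hjI
      rw [hIk k hkl, hR] at h2
      have hlen : (v k).length ≤ (v m).length := le_of_lt (hdec m k hmk hkl)
      have : v k <+: v m := List.prefix_of_prefix_length_le h2.1 hprem hlen
      exact hup4 k hmk h this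
end

section
/- With the above setting, for every 0 < k ≤ l: |I_k(0)| = |R(v_k)| - Σ_{m : 0 ≤ m < k, up(v_m) = v_k} |R(v_m)|. -/
/-!
Each step `I_k(m) = I_k(m+1) \ R(v_m)` removes `|I_k(m+1) ∩ R(v_m)|` elements, so
`|I_k(0)|` is `|R(v_k)|` minus the sum of these intersections. Prefixes of the one string `s_j`
are ordered by length, so for `j ∈ R(v_m)` and `q > m` (hence `|v_q| < |v_m|`) we have
`j ∈ R(v_q)` iff `v_q` is a prefix of `v_m`. Hence `I_k(m+1) ∩ R(v_m)` is all of `R(v_m)` when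
`v_k` is the first prefix of `v_m` after it, i.e. `up(v_m) = v_k`, and is empty otherwise.
-/

open Finset

section SdiffChain

variable {β : Type*} [DecidableEq β] {A C : ℕ → Finset β} {k : ℕ}

theorem eq_sdiff_biUnion_of_eq_sdiff (hA : ∀ m < k, A m = A (m + 1) \ C m) {p : ℕ}
    (hp : p ≤ k) : A p = A k \ (Ico p k).biUnion C := by
  induction hp using Nat.decreasingInduction with
  | self => simp
  | of_succ p hpk ih =>
    rw [hA p hpk, ih, sdiff_sdiff_left, sup_eq_union, ← insert_Ico_add_one_left_eq_Ico hpk, biUnion_insert,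
      union_comm]

theorem card_add_sum_card_inter_of_eq_sdiff (hA : ∀ m < k, A m = A (m + 1) \ C m) :
    #(A 0) + ∑ m ∈ range k, #(A (m + 1) ∩ C m) = #(A k) := by
  induction k with
  | zero => simp
  | succ k ih =>
    rw [sum_range_succ, ← add_assoc, ih fun m hm => hA m (by omega), hA k k.lt_succ_self,
      card_sdiff_add_card_inter]

end SdiffChain

section ProperPrefixes

variable {α ι : Type*} {s : ι → List α} {R : List α → Finset ι}

theorem subset_of_prefix (hR : ∀ u j, j ∈ R u ↔ u <+: s j ∧ u ≠ s j) {u w : List α}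
    (hwu : w <+: u) : R u ⊆ R w := by
  intro j hj
  obtain ⟨hus, hne⟩ := (hR u j).mp hj
  refine (hR w j).mpr ⟨hwu.trans hus, ?_⟩
  rintro rfl
  exact hne (hus.eq_of_length (le_antisymm hus.length_le hwu.length_le))

theorem mem_iff_prefix_of_length_le (hR : ∀ u j, j ∈ R u ↔ u <+: s j ∧ u ≠ s j)
    {u w : List α} {j : ι} (hj : j ∈ R u) (hlen : w.length ≤ u.length) :
    j ∈ R w ↔ w <+: u :=
  ⟨fun hw => List.prefix_of_prefix_length_le ((hR w j).mp hw).1 ((hR u j).mp hj).1 hlen,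
    fun hwu => subset_of_prefix hR hwu hj⟩

end ProperPrefixes

theorem eq_iff_of_first_above {P : ℕ → Prop} {m u k : ℕ} (hmu : m < u) (hu : P u)
    (hfirst : ∀ q, m < q → q < u → ¬ P q) (hmk : m < k) :
    u = k ↔ P k ∧ ∀ q, m < q → q < k → ¬ P q := by
  refine ⟨by rintro rfl; exact ⟨hu, hfirst⟩, fun ⟨hk, hbefore⟩ => ?_⟩
  rcases lt_trichotomy u k with h | h | h
  · exact absurd hu (hbefore u hmu h)
  · exact h
  · exact absurd hk (hfirst k hmk h)

theorem inter_eq_ite_of_first_prefix {α ι : Type*} [DecidableEq ι] {s : ι → List α}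
    {R : List α → Finset ι} (hR : ∀ u j, j ∈ R u ↔ u <+: s j ∧ u ≠ s j)
    {v : ℕ → List α} {A : ℕ → Finset ι} {l k m u : ℕ}
    (hdec : ∀ m k, m < k → k ≤ l → (v k).length < (v m).length)
    (hA : ∀ m < k, A m = A (m + 1) \ R (v m)) (hAk : A k = R (v k)) (hkl : k ≤ l) (hmk : m < k)
    (hmu : m < u) (hprefix : v u <+: v m) (hfirst : ∀ q, m < q → q < u → ¬ v q <+: v m) :
    A (m + 1) ∩ R (v m) = if u = k then R (v m) else ∅ := by
  have hmem : ∀ j ∈ R (v m), ∀ q, m < q → q ≤ l → (j ∈ R (v q) ↔ v q <+: v m) :=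
    fun j hj q hmq hql => mem_iff_prefix_of_length_le hR hj (hdec m q hmq hql).le
  have hu_iff := eq_iff_of_first_above hmu hprefix hfirst hmk
  ext j
  rw [eq_sdiff_biUnion_of_eq_sdiff hA hmk, hAk, ← filter_const, mem_inter, mem_filter, mem_sdiff,
    mem_biUnion]
  constructor
  · rintro ⟨⟨hjk, hjq⟩, hjm⟩
    refine ⟨hjm, hu_iff.mpr ⟨(hmem j hjm k hmk hkl).mp hjk, fun q hmq hqk hq => hjq ?_⟩⟩
    exact ⟨q, mem_Ico.mpr ⟨hmq, hqk⟩, (hmem j hjm q hmq (by omega)).mpr hq⟩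
  · rintro ⟨hjm, huk⟩
    refine ⟨⟨(hmem j hjm k hmk hkl).mpr (hu_iff.mp huk).1, ?_⟩, hjm⟩
    rintro ⟨q, hq, hjq⟩
    obtain ⟨hmq, hqk⟩ := mem_Ico.mp hq
    exact (hu_iff.mp huk).2 q hmq hqk ((hmem j hjm q hmq (by omega)).mp hjq)

theorem Ik_zero_card_general {α : Type*} {n : ℕ} (s : Fin n → List α)
    (l : ℕ) (v : ℕ → List α)
    (hdec : ∀ m k, m < k → k ≤ l → (v k).length < (v m).length)
    (R : List α → Finset (Fin n))
    (hR : ∀ u j, j ∈ R u ↔ (u <+: s j ∧ u ≠ s j))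
    (I : ℕ → ℕ → Finset (Fin n))
    (hIk : ∀ k ≤ l, I k k = R (v k))
    (hI : ∀ k ≤ l, ∀ m < k, I k m = I k (m+1) \ R (v m))
    (up : ℕ → ℕ)
    (hup : ∀ m < l, m < up m ∧ up m ≤ l ∧ v (up m) <+: v m ∧
      ∀ q, m < q → q < up m → ¬ (v q <+: v m)) :
    ∀ k, 0 < k → k ≤ l →
      (I k 0).card = (R (v k)).card -
        ∑ m ∈ (Finset.range k).filter (fun m => up m = k), (R (v m)).card := by
  intro k _ hkl
  have hstep : ∀ m ∈ range k, #(I k (m + 1) ∩ R (v m)) = if up m = k then #(R (v m)) else 0 := by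
    intro m hm
    have hmk := mem_range.mp hm
    obtain ⟨hmu, -, hprefix, hfirst⟩ := hup m (hmk.trans_le hkl)
    rw [inter_eq_ite_of_first_prefix hR hdec (hI k hkl) (hIk k hkl) hkl hmk hmu hprefix hfirst,
      apply_ite card, card_empty]
  have htelescope := card_add_sum_card_inter_of_eq_sdiff (hI k hkl)
  rw [hIk k hkl, sum_congr rfl hstep, ← sum_filter] at htelescope
  omega

/-- Theorem 1 of the paper: for every `0 < k ≤ l`,
`|I_k 0| = |R (v k)| - Σ_{m < k, up m = k} |R (v m)|`. -/
theorem Ik_zero_card {α : Type*} {n : ℕ} (s : Fin n → List α)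
    (i : Fin n) (l : ℕ) (v : ℕ → List α)
    (hsuf : ∀ m ≤ l, v m <:+ s i) (hl : v l = [])
    (hdec : ∀ m k, m < k → k ≤ l → (v k).length < (v m).length)
    (hPpre : ∀ m ≤ l, ∃ j : Fin n, v m <+: s j)
    (R : List α → Finset (Fin n))
    (hR : ∀ u j, j ∈ R u ↔ (u <+: s j ∧ u ≠ s j))
    (I : ℕ → ℕ → Finset (Fin n))
    (hIk : ∀ k ≤ l, I k k = R (v k))
    (hI : ∀ k ≤ l, ∀ m < k, I k m = I k (m+1) \ R (v m))
    (up : ℕ → ℕ)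
    (hup : ∀ m < l, m < up m ∧ up m ≤ l ∧ v (up m) <+: v m ∧
      ∀ q, m < q → q < up m → ¬ (v q <+: v m)) :
    ∀ k, 0 < k → k ≤ l →
      (I k 0).card = (R (v k)).card -
        ∑ m ∈ (Finset.range k).filter (fun m => up m = k), (R (v m)).card :=
  Ik_zero_card_general s l v hdec R hR I hIk hI up hup
end

section
/- Let w be a nonempty prefix of some string, and suppose u is the longest proper suffix of w that is also a prefix of some string in P, restricted to the case where u is additionally a prefix of w. Then: the longest string that is both a proper prefix and a proper suffix of w (the longest border of w) equals the first prefix-of-w encountered when iterating the failure-link map (longest proper suffix that is a P-prefix) starting from w. -/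
theorem pref_compare {α : Type*} {l₁ l₂ l₃ : List α} (h₁ : l₁ <+: l₃) (h₂ : l₂ <+: l₃)
    (h : l₁.length ≤ l₂.length) : l₁ <+: l₂ := by
  rw [List.prefix_iff_eq_take] at h₁ h₂ ⊢
  conv_lhs => rw [h₁]
  rw [h₂, List.take_take, min_eq_left h]

theorem suf_compare {α : Type*} {l₁ l₂ l₃ : List α} (h₁ : l₁ <:+ l₃) (h₂ : l₂ <:+ l₃)
    (h : l₁.length ≤ l₂.length) : l₁ <:+ l₂ := by
  rw [← List.reverse_prefix] at h₁ h₂ ⊢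
  exact pref_compare h₁ h₂ (by simpa using h)

/-- The longest border of a nonempty `P`-prefix `w` is the first prefix of `w`
encountered when iterating the failure-link map `f` (longest proper suffix
that is a `P`-prefix) starting from `w`. -/
theorem longest_border_eq_first_prefix_iterate {α : Type*} (P : Set (List α))
    (f : List α → List α)
    (hfe : f [] = [])
    (hf : ∀ u : List α, u ≠ [] → (∃ p ∈ P, u <+: p) →
      (f u <:+ u ∧ f u ≠ u) ∧ (∃ p ∈ P, f u <+: p) ∧
      ∀ z : List α, z <:+ u → z ≠ u → (∃ p ∈ P, z <+: p) →
        z.length ≤ (f u).length)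
    (w : List α) (hw : w ≠ []) (hwP : ∃ p ∈ P, w <+: p)
    (b : List α)
    (hb : ((b <+: w ∧ b ≠ w) ∧ (b <:+ w ∧ b ≠ w)) ∧
      ∀ b' : List α, ((b' <+: w ∧ b' ≠ w) ∧ (b' <:+ w ∧ b' ≠ w)) →
        b'.length ≤ b.length) :
    ∃ N : ℕ, 0 < N ∧ f^[N] w = b ∧
      ∀ m : ℕ, 0 < m → m < N → ¬ (f^[m] w <+: w) := by
  classical
  obtain ⟨⟨⟨hbpre, hbnew⟩, hbsuf, _⟩, hbmax⟩ := hb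
  obtain ⟨p, hpP, hwp⟩ := hwP
  have hbP : ∃ q ∈ P, b <+: q := ⟨p, hpP, hbpre.trans hwp⟩
  have key : ∀ n : ℕ, 1 ≤ n →
      (∃ m, 1 ≤ m ∧ m ≤ n ∧ f^[m] w = b) ∨
      ((f^[n] w <:+ w) ∧ f^[n] w ≠ w ∧ b.length < (f^[n] w).length ∧
        (∃ q ∈ P, f^[n] w <+: q) ∧ (f^[n] w).length + n ≤ w.length) := by
    intro n hn
    induction n with
    | zero => omega
    | succ n ih =>
      rcases Nat.lt_or_ge n 1 with h1 | h1
      · -- base case: n = 0, so n+1 = 1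
        interval_cases n
        simp only [zero_add, Function.iterate_one]
        obtain ⟨⟨hsuf, hne⟩, hP, hmax⟩ := hf w hw ⟨p, hpP, hwp⟩
        have hble : b.length ≤ (f w).length := hmax b hbsuf hbnew hbP
        rcases eq_or_lt_of_le hble with heq | hlt
        · left
          refine ⟨1, le_refl 1, le_refl 1, ?_⟩
          simp only [zero_add, Function.iterate_one]
          exact ((suf_compare hbsuf hsuf hble).eq_of_length heq).symm
        · right
          have hlen : (f w).length < w.length := by
            rcases eq_or_lt_of_le hsuf.length_le with he | h
            · exact absurd (hsuf.eq_of_length he) hne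
            · exact h
          exact ⟨hsuf, hne, hlt, hP, by omega⟩
      · rcases ih h1 with ⟨m, hm1, hm2, hm3⟩ | ⟨hsuf, hne, hlt, hP, hlen⟩
        · exact Or.inl ⟨m, hm1, hm2.trans (Nat.le_succ n), hm3⟩
        · set u := f^[n] w with hu
          have hune : u ≠ [] := by
            intro h; rw [h] at hlt; simp at hlt
          obtain ⟨⟨hsuf', hne'⟩, hP', hmax'⟩ := hf u hune hP
          have hiter : f^[n + 1] w = f u := Function.iterate_succ_apply' f n w
          have hbu : b <:+ u := suf_compare hbsuf hsuf hlt.le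
          have hbneu : b ≠ u := fun h => by rw [h] at hlt; omega
          have hble : b.length ≤ (f u).length := hmax' b hbu hbneu hbP
          have hfulen : (f u).length < u.length := by
            rcases eq_or_lt_of_le hsuf'.length_le with he | h
            · exact absurd (hsuf'.eq_of_length he) hne'
            · exact h
          have hfusufw : f u <:+ w := hsuf'.trans hsuf
          rcases eq_or_lt_of_le hble with heq | hlt'
          · left
            refine ⟨n + 1, by omega, le_refl _, ?_⟩
            rw [hiter]
            exact ((suf_compare hbsuf hfusufw hble).eq_of_length heq).symm
          · right
            rw [hiter]
            have hulen : u.length ≤ w.length := hsuf.length_le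
            refine ⟨hfusufw, ?_, hlt', hP', by omega⟩
            intro h
            rw [h] at hfulen
            omega
  -- existence of an iterate that is a prefix of w
  have hex : ∃ m : ℕ, 1 ≤ m ∧ f^[m] w <+: w := by
    rcases key (w.length + 1) (by omega) with ⟨m, hm1, _, hm3⟩ | ⟨_, _, _, _, hlen⟩
    · exact ⟨m, hm1, hm3 ▸ hbpre⟩
    · omega
  set N := Nat.find hex with hN
  obtain ⟨hN1, hNpre⟩ := Nat.find_spec hex
  have hNmin : ∀ m, 0 < m → m < N → ¬ (f^[m] w <+: w) := by
    intro m hm0 hmN hpre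
    exact Nat.find_min hex hmN ⟨hm0, hpre⟩
  refine ⟨N, hN1, ?_, hNmin⟩
  rcases key N hN1 with ⟨m, hm1, hm2, hm3⟩ | ⟨hsuf, hne, hlt, _, _⟩
  · rcases eq_or_lt_of_le hm2 with he | h
    · exact he ▸ hm3
    · exact absurd (hm3 ▸ hbpre) (hNmin m hm1 h)
  · exfalso
    have := hbmax (f^[N] w) ⟨⟨hNpre, hne⟩, hsuf, hne⟩
    omega
end

section
/- Let P = {s_1,...,s_n} and for each i let v_0^i, ..., v_{l_i}^i be the suffixes of s_i that are prefixes of strings in P, in strictly decreasing length order. Then a string w belongs to Ov(P) (is the longest overlap from some s_i to some s_j) if and only if there exist i and 0 < k ≤ l_i with w = v_k^i and R(v_k^i) \ (R(v_{k-1}^i) ∪ ... ∪ R(v_0^i)) ≠ ∅, where R(u) = { j : u is a proper prefix of s_j }. -/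
/-- Characterization of `Ov P`: a string `w` is the longest overlap from some
`s i` to some `s j` if and only if `w = v i k` for some `i` and `0 < k ≤ l i`
with `R (v i k) \ (R (v i (k-1)) ∪ ⋯ ∪ R (v i 0)) ≠ ∅`, where for each `i`
the sequence `v i 0, …, v i (l i)` lists the suffixes of `s i` that are
prefixes of strings in `P` in strictly decreasing length order. -/
theorem mem_Ov_iff {α : Type*} {n : ℕ} (s : Fin n → List α)
    (hne : ∀ i, s i ≠ [])
    (hsub : ∀ i j : Fin n, s i <:+: s j → i = j)
    (l : Fin n → ℕ) (v : Fin n → ℕ → List α)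
    (h0 : ∀ i, v i 0 = s i) (hl : ∀ i, v i (l i) = [])
    (hsuf : ∀ i, ∀ m ≤ l i, v i m <:+ s i)
    (hPpre : ∀ i, ∀ m ≤ l i, ∃ j : Fin n, v i m <+: s j)
    (hdec : ∀ i, ∀ m k, m < k → k ≤ l i → (v i k).length < (v i m).length)
    (hcomplete : ∀ i, ∀ w : List α, w <:+ s i → (∃ j : Fin n, w <+: s j) →
      ∃ m ≤ l i, w = v i m) :
    ∀ w : List α,
      (∃ i j : Fin n,
        ((w <:+ s i ∧ w ≠ s i) ∧ (w <+: s j ∧ w ≠ s j)) ∧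
        ∀ w' : List α, ((w' <:+ s i ∧ w' ≠ s i) ∧ (w' <+: s j ∧ w' ≠ s j)) →
          w'.length ≤ w.length) ↔
      (∃ i : Fin n, ∃ k, 0 < k ∧ k ≤ l i ∧ w = v i k ∧
        ∃ j : Fin n, (v i k <+: s j ∧ v i k ≠ s j) ∧
          ∀ m < k, ¬ (v i m <+: s j ∧ v i m ≠ s j)) := by
  intro w
  constructor
  · rintro ⟨i, j, ⟨⟨hws, hwns⟩, hwp, hwnp⟩, hmax⟩
    obtain ⟨k, hk, hwk⟩ := hcomplete i w hws ⟨j, hwp⟩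
    have hk0 : 0 < k := by
      rcases Nat.eq_zero_or_pos k with h | h
      · exfalso; apply hwns; rw [hwk, h, h0]
      · exact h
    refine ⟨i, k, hk0, hk, hwk, j, ⟨hwk ▸ hwp, hwk ▸ hwnp⟩, ?_⟩
    rintro m hm ⟨hp, hnp⟩
    rcases Nat.eq_zero_or_pos m with h0' | hpos
    · subst h0'
      rw [h0 i] at hp hnp
      have hij := hsub i j hp.isInfix
      subst hij
      exact hnp rfl
    · have hmle : m ≤ l i := le_of_lt (lt_of_lt_of_le hm hk)
      have hms : v i m <:+ s i := hsuf i m hmle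
      have hne' : v i m ≠ s i := by
        have hd := hdec i 0 m hpos hmle
        rw [h0 i] at hd
        intro he; rw [he] at hd; omega
      have h1 := hmax (v i m) ⟨⟨hms, hne'⟩, hp, hnp⟩
      have h2 := hdec i m k hm hk
      rw [hwk] at h1; omega
  · rintro ⟨i, k, hk0, hkl, hwk, j, ⟨hp, hnp⟩, hmin⟩
    have hws : w <:+ s i := hwk ▸ hsuf i k hkl
    have hwns : w ≠ s i := by
      have hd := hdec i 0 k hk0 hkl
      rw [h0 i] at hd
      intro he; rw [hwk] at he; rw [he] at hd; omega
    refine ⟨i, j, ⟨⟨hws, hwns⟩, hwk ▸ hp, hwk ▸ hnp⟩, ?_⟩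
    rintro w' ⟨⟨hws', _⟩, hp', hnp'⟩
    obtain ⟨m, hm, hw'm⟩ := hcomplete i w' hws' ⟨j, hp'⟩
    rcases lt_or_ge m k with h | h
    · exact absurd ⟨hw'm ▸ hp', hw'm ▸ hnp'⟩ (hmin m h)
    · rcases eq_or_lt_of_le h with h | h
      · rw [hw'm, hwk, h]
      · have := hdec i k m h hm
        rw [hw'm, hwk]; omega
end
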